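/- Let E be a finite-dimensional real inner product space, K ⊆ E a nonempty closed convex set, and F : E → E continuous and pseudomonotone on K. Then the solution set SOL(K, F) is nonempty and bounded if and only if the only vector d ∈ E satisfying both (i) x + t • d ∈ K for all x ∈ K and all t ≥ 0 (i.e. d ∈ K∞) and (ii) ⟪F(x), d⟫ ≤ 0 for all x ∈ K (i.e. d ∈ −(F(K))*) is d = 0; that is, K∞ ∩ [−(F(K))*] = {0}. -/

import Mathlib

/-!
If `x` solves the variational inequality and `d ≠ 0` lies in `K∞ ∩ -(F K)*`, pseudomonotonicity
makes every `x + t • d` a Minty solution, hence a solution by continuity of `F`; so the solution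
set is unbounded.

Conversely, on a compact convex set a Minty solution exists by a KKM-type argument resting on
Berge's theorem (compact convex sets with a convex union, any `n - 1` of which meet, all meet), and
it solves the variational inequality by continuity. Truncate `K` by the balls of radius `n`: either
some truncated solution lies in the open ball, and then it solves the problem on all of `K`, or the
truncated solutions escape to infinity. Points of `K` escaping to infinity and satisfying the Minty
inequalities eventually, as do the elements of an unbounded solution set, have normalized limits;
any such limit is a nonzero direction in `K∞ ∩ -(F K)*`.
-/

open Set Finset Filter Topology Metric RealInnerProductSpace

section Berge

variable {E : Type*} [TopologicalSpace E] [AddCommGroup E] [Module ℝ E] [IsTopologicalAddGroup E]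
  [ContinuousSMul ℝ E]

theorem IsClosed.inter_nonempty_of_convex_union {A B : Set E} (hA : IsClosed A) (hB : IsClosed B)
    (hAB : Convex ℝ (A ∪ B)) (hAne : A.Nonempty) (hBne : B.Nonempty) : (A ∩ B).Nonempty := by
  obtain ⟨x, hx⟩ := hAne
  obtain ⟨y, hy⟩ := hBne
  exact (isPreconnected_closed_iff.mp hAB.isPreconnected A B hA hB subset_rfl
    ⟨x, Or.inl hx, hx⟩ ⟨y, Or.inr hy, hy⟩).mono inter_subset_right

variable [LocallyConvexSpace ℝ E] [T2Space E]

theorem nonempty_biInter_of_convex_biUnion {ι : Type*} [DecidableEq ι] {s : Finset ι}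
    {C : ι → Set E} (hs : 2 ≤ #s) (hconv : ∀ i ∈ s, Convex ℝ (C i))
    (hcomp : ∀ i ∈ s, IsCompact (C i)) (hU : Convex ℝ (⋃ i ∈ s, C i))
    (herase : ∀ k ∈ s, (⋂ i ∈ s.erase k, C i).Nonempty) : (⋂ i ∈ s, C i).Nonempty := by
  obtain ⟨n, hn⟩ := Nat.exists_eq_add_of_le' hs
  induction n generalizing s C with
  | zero =>
    obtain ⟨a, b, hab, rfl⟩ := Finset.card_eq_two.mp hn
    have ha := herase b (by simp)
    have hb := herase a (by simp)
    simp only [Finset.erase_insert_of_ne hab, erase_singleton, insert_empty_eq,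
      Finset.mem_singleton, iInter_iInter_eq_left, Finset.erase_insert (Finset.notMem_singleton.mpr hab),
      Finset.mem_insert, iUnion_iUnion_eq_or_left, iUnion_iUnion_eq_left,
      iInter_iInter_eq_or_left] at ha hb hU ⊢
    exact (hcomp a (by simp)).isClosed.inter_nonempty_of_convex_union (hcomp b (by simp)).isClosed
      hU ha hb
  | succ n ih =>
    obtain ⟨k, hk⟩ : s.Nonempty := Finset.card_pos.mp (by omega)
    set B := ⋂ i ∈ s.erase k, C i
    have hBk : (⋂ i ∈ s, C i) = C k ∩ B := by
      rw [← Finset.set_biInter_insert, Finset.insert_erase hk]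
    rw [hBk]
    by_contra hdisj
    rw [Set.not_nonempty_iff_eq_empty, ← disjoint_iff_inter_eq_empty] at hdisj
    have hsk : 2 ≤ #(s.erase k) := by rw [card_erase_of_mem hk]; omega
    obtain ⟨j₀, hj₀⟩ : (s.erase k).Nonempty := Finset.card_pos.mp (by omega)
    have hBconv : Convex ℝ B := convex_iInter₂ fun i hi => hconv i (mem_of_mem_erase hi)
    have hBcomp : IsCompact B := (hcomp j₀ (mem_of_mem_erase hj₀)).of_isClosed_subset
      (isClosed_biInter fun i hi => (hcomp i (mem_of_mem_erase hi)).isClosed)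
      (biInter_subset_of_mem hj₀)
    obtain ⟨f, u, v, hfB, huv, hfk⟩ := geometric_hahn_banach_compact_closed hBconv hBcomp
      (hconv k hk) (hcomp k hk).isClosed hdisj.symm
    -- Cut every set by the separating hyperplane `H`: this discards `C k`, keeps the union convex,
    -- and, by the intermediate value theorem between `B` and `C k`, keeps the `n - 1`-fold
    -- intersections nonempty.
    set H := {x | f x = u}
    have hHconv : Convex ℝ H := convex_hyperplane f.toLinearMap.isLinear u
    have hHclosed : IsClosed H := isClosed_eq f.continuous continuous_const
    have hkH : C k ∩ H = ∅ :=
      eq_empty_of_forall_notMem fun x ⟨hx, hxH⟩ => (huv.trans (hfk x hx)).ne' hxH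
    have hUH : (⋃ i ∈ s.erase k, C i ∩ H) = (⋃ i ∈ s, C i) ∩ H := by
      rw [iUnion₂_inter, ← Finset.insert_erase hk, Finset.set_biUnion_insert, hkH, empty_union,
        Finset.insert_erase hk]
    have hHerase : ∀ j ∈ s.erase k, (⋂ i ∈ (s.erase k).erase j, C i ∩ H).Nonempty := by
      intro j hj
      obtain ⟨b, hb⟩ : B.Nonempty := herase k hk
      obtain ⟨z, hz⟩ := herase j (mem_of_mem_erase hj)
      have hSconv : Convex ℝ (⋂ i ∈ (s.erase k).erase j, C i) :=
        convex_iInter₂ fun i hi => hconv i (mem_of_mem_erase (mem_of_mem_erase hi))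
      have hbS : b ∈ ⋂ i ∈ (s.erase k).erase j, C i :=
        mem_iInter₂.mpr fun i hi => mem_iInter₂.mp hb i (mem_of_mem_erase hi)
      have hzS : z ∈ ⋂ i ∈ (s.erase k).erase j, C i := mem_iInter₂.mpr fun i hi =>
        mem_iInter₂.mp hz i (mem_of_mem_erase (erase_right_comm (s := s) ▸ hi))
      have hzk : z ∈ C k := mem_iInter₂.mp hz k (mem_erase.mpr ⟨(ne_of_mem_erase hj).symm, hk⟩)
      obtain ⟨w, hwS, hwH⟩ := hSconv.isPreconnected.intermediate_value hbS hzS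
        f.continuous.continuousOn ⟨(hfB b hb).le, (huv.trans (hfk z hzk)).le⟩
      exact ⟨w, mem_iInter₂.mpr fun i hi => ⟨mem_iInter₂.mp hwS i hi, hwH⟩⟩
    obtain ⟨w, hw⟩ := ih hsk (fun i hi => (hconv i (mem_of_mem_erase hi)).inter hHconv)
      (fun i hi => (hcomp i (mem_of_mem_erase hi)).inter_right hHclosed) (hUH ▸ hU.inter hHconv)
      hHerase (by rw [card_erase_of_mem hk]; omega)
    have hwB : w ∈ B := mem_iInter₂.mpr fun i hi => (mem_iInter₂.mp hw i hi).1
    exact (hfB w hwB).ne (mem_iInter₂.mp hw j₀ hj₀).2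

end Berge

section NormedSpace

variable {E : Type*} [NormedAddCommGroup E] [NormedSpace ℝ E]

def recessionCone (K : Set E) : Set E :=
  {d | ∀ x ∈ K, ∀ t : ℝ, 0 ≤ t → x + t • d ∈ K}

theorem eq_zero_of_isBounded_of_add_smul_mem {S : Set E} (hS : Bornology.IsBounded S) {x d : E}
    (h : ∀ t : ℝ, 0 ≤ t → x + t • d ∈ S) : d = 0 := by
  obtain ⟨R, hR⟩ := isBounded_iff_forall_norm_le.mp hS
  by_contra hd
  have hd0 : 0 < ‖d‖ := norm_pos_iff.mpr hd
  have hxR : ‖x‖ ≤ R := by simpa using hR _ (h 0 le_rfl)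
  set t := (R + ‖x‖ + 1) / ‖d‖
  have ht : 0 ≤ t := div_nonneg (by linarith [norm_nonneg x]) hd0.le
  have htd : ‖t • d‖ = R + ‖x‖ + 1 := by
    rw [norm_smul, Real.norm_of_nonneg ht, div_mul_cancel₀ _ hd0.ne']
  have := norm_sub_le (x + t • d) x
  rw [add_sub_cancel_left, htd] at this
  linarith [hR _ (h t ht)]

theorem add_smul_mem_of_tendsto_inv_smul {ι : Type*} {l : Filter ι} [l.NeBot] {K : Set E}
    (hKc : IsClosed K) (hKconv : Convex ℝ K) {x₀ d : E} (hx₀ : x₀ ∈ K) {x : ι → E} {s : ι → ℝ}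
    (hxK : ∀ i, x i ∈ K) (hs : Tendsto s l atTop)
    (hd : Tendsto (fun i => (s i)⁻¹ • (x i - x₀)) l (𝓝 d)) {t : ℝ} (ht : 0 ≤ t) :
    x₀ + t • d ∈ K := by
  refine hKc.mem_of_tendsto (tendsto_const_nhds.add (hd.const_smul t)) ?_
  filter_upwards [hs.eventually_ge_atTop t, hs.eventually_gt_atTop 0] with i hti hsi
  rw [smul_smul, ← div_eq_mul_inv]
  exact hKconv.add_smul_sub_mem hx₀ (hxK i) ⟨div_nonneg ht hsi.le, (div_le_one hsi).mpr hti⟩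

end NormedSpace

section VariationalInequality

variable {E : Type*} [NormedAddCommGroup E] [InnerProductSpace ℝ E]

def PseudomonotoneOn (F : E → E) (K : Set E) : Prop :=
  ∀ x ∈ K, ∀ y ∈ K, 0 ≤ ⟪F x, y - x⟫ → 0 ≤ ⟪F y, y - x⟫

theorem PseudomonotoneOn.mono {F : E → E} {K K' : Set E} (h : PseudomonotoneOn F K)
    (hK' : K' ⊆ K) : PseudomonotoneOn F K' :=
  fun x hx y hy => h x (hK' hx) y (hK' hy)

def viSolutionSet (K : Set E) (F : E → E) : Set E :=
  {x ∈ K | ∀ y ∈ K, 0 ≤ ⟪F x, y - x⟫}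

theorem convex_setOf_inner_sub_nonneg (a y : E) : Convex ℝ {x | 0 ≤ ⟪a, y - x⟫} := by
  simp only [inner_sub_right, sub_nonneg]
  exact convex_halfSpace_le (innerₛₗ ℝ a).isLinear _

theorem isClosed_setOf_inner_sub_nonneg (a y : E) : IsClosed {x | 0 ≤ ⟪a, y - x⟫} :=
  isClosed_le continuous_const (continuous_const.inner (continuous_const.sub continuous_id))

theorem PseudomonotoneOn.exists_inner_sub_nonneg_of_mem_convexHull {F : E → E} {T : Set E}
    (hpseudo : PseudomonotoneOn F (convexHull ℝ T)) {x : E} (hx : x ∈ convexHull ℝ T) :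
    ∃ y ∈ T, 0 ≤ ⟪F y, y - x⟫ := by
  obtain ⟨y, hyT, hxy⟩ := ((innerₛₗ ℝ (F x)).convexOn (convex_convexHull ℝ T))
    |>.exists_ge_of_mem_convexHull (subset_convexHull ℝ T) hx
  refine ⟨y, hyT, hpseudo x hx y (subset_convexHull ℝ T hyT) ?_⟩
  simpa [inner_sub_right] using hxy

theorem PseudomonotoneOn.exists_minty_of_finset {F : E → E} {T : Finset E}
    (hpseudo : PseudomonotoneOn F (convexHull ℝ T)) (hT : T.Nonempty) :
    ∃ x ∈ convexHull ℝ (T : Set E), ∀ y ∈ T, 0 ≤ ⟪F y, y - x⟫ := by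
  classical
  induction T using Finset.strongInduction with
  | H T ih =>
    obtain ⟨a, rfl⟩ | hT2 := hT.exists_eq_singleton_or_nontrivial
    · exact ⟨a, subset_convexHull ℝ _ (by simp), by simp⟩
    set C : E → Set E := fun y => convexHull ℝ T ∩ {x | 0 ≤ ⟪F y, y - x⟫}
    have hCU : (⋃ y ∈ T, C y) = convexHull ℝ T := by
      refine Subset.antisymm (iUnion₂_subset fun y _ => inter_subset_left) fun x hx => ?_
      obtain ⟨y, hyT, hxy⟩ := hpseudo.exists_inner_sub_nonneg_of_mem_convexHull hx
      exact mem_iUnion₂.mpr ⟨y, hyT, hx, hxy⟩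
    have herase : ∀ k ∈ T, (⋂ y ∈ T.erase k, C y).Nonempty := by
      intro k hk
      have hsub : convexHull ℝ (T.erase k : Set E) ⊆ convexHull ℝ (T : Set E) :=
        convexHull_mono (coe_subset.mpr (erase_subset k T))
      obtain ⟨x, hx, hxT⟩ :=
        ih (T.erase k) (erase_ssubset hk) (hpseudo.mono hsub) hT2.erase_nonempty
      exact ⟨x, mem_iInter₂.mpr fun y hy => ⟨hsub hx, hxT y hy⟩⟩
    obtain ⟨x, hx⟩ := nonempty_biInter_of_convex_biUnion (one_lt_card_iff_nontrivial.mpr hT2)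
      (fun y _ => (convex_convexHull ℝ _).inter (convex_setOf_inner_sub_nonneg _ _))
      (fun y _ => (T.finite_toSet.isCompact_convexHull ℝ).inter_right
        (isClosed_setOf_inner_sub_nonneg _ _))
      (by rw [hCU]; exact convex_convexHull ℝ _) herase
    obtain ⟨a, ha⟩ := hT
    exact ⟨x, (mem_iInter₂.mp hx a ha).1, fun y hy => (mem_iInter₂.mp hx y hy).2⟩

theorem PseudomonotoneOn.exists_minty_of_isCompact {F : E → E} {K : Set E}
    (hpseudo : PseudomonotoneOn F K) (hne : K.Nonempty) (hcomp : IsCompact K)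
    (hconv : Convex ℝ K) : ∃ x ∈ K, ∀ y ∈ K, 0 ≤ ⟪F y, y - x⟫ := by
  classical
  obtain ⟨x₀, hx₀⟩ := hne
  obtain ⟨x, hx, hxK⟩ := hcomp.inter_iInter_nonempty (fun y : K => {x | 0 ≤ ⟪F y, y - x⟫})
    (fun y => isClosed_setOf_inner_sub_nonneg _ _) fun u => by
      have hTK : ↑(insert x₀ (u.image Subtype.val)) ⊆ K := by
        simp [insert_subset_iff, hx₀]
      obtain ⟨x, hx, hxT⟩ :=
        (hpseudo.mono (convexHull_min hTK hconv)).exists_minty_of_finset (insert_nonempty _ _)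
      exact ⟨x, convexHull_min hTK hconv hx,
        mem_iInter₂.mpr fun y hy => hxT y (mem_insert_of_mem (mem_image_of_mem _ hy))⟩
  exact ⟨x, hx, fun y hy => mem_iInter.mp hxK ⟨y, hy⟩⟩

theorem Convex.inner_sub_nonneg_of_mem_nhds {K : Set E} (hK : Convex ℝ K) {a x : E} (hx : x ∈ K)
    {U : Set E} (hU : U ∈ 𝓝 x) (h : ∀ y ∈ K ∩ U, 0 ≤ ⟪a, y - x⟫) {y : E} (hy : y ∈ K) :
    0 ≤ ⟪a, y - x⟫ := by
  have hseg : Tendsto (fun s : ℝ => x + s • (y - x)) (𝓝[>] 0) (𝓝 x) := by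
    have : Continuous fun s : ℝ => x + s • (y - x) := by fun_prop
    simpa using (this.tendsto 0).mono_left nhdsWithin_le_nhds
  obtain ⟨s, hsU, hs⟩ := ((hseg.eventually hU).and (Ioc_mem_nhdsGT one_pos)).exists
  have := h _ ⟨hK.add_smul_sub_mem hx hy (Ioc_subset_Icc_self hs), hsU⟩
  rw [add_sub_cancel_left, inner_smul_right] at this
  exact nonneg_of_mul_nonneg_right this hs.1

theorem Convex.inner_sub_nonneg_of_minty {K : Set E} (hK : Convex ℝ K) {F : E → E}
    (hF : Continuous F) {x : E} (hx : x ∈ K) (h : ∀ y ∈ K, 0 ≤ ⟪F y, y - x⟫) {y : E}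
    (hy : y ∈ K) : 0 ≤ ⟪F x, y - x⟫ := by
  set g : ℝ → ℝ := fun s => ⟪F (x + s • (y - x)), y - x⟫
  have hg : Continuous g := by fun_prop
  have hpos : ∀ s ∈ Ioc (0 : ℝ) 1, 0 ≤ g s := fun s hs => by
    have := h _ (hK.add_smul_sub_mem hx hy (Ioc_subset_Icc_self hs))
    rw [add_sub_cancel_left, inner_smul_right] at this
    exact nonneg_of_mul_nonneg_right this hs.1
  have := ge_of_tendsto (hg.continuousWithinAt (s := Ioi 0) (x := 0)).tendsto
    (eventually_of_mem (Ioc_mem_nhdsGT one_pos) hpos)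
  simpa [g] using this

theorem add_smul_mem_viSolutionSet {K : Set E} (hKconv : Convex ℝ K) {F : E → E}
    (hF : Continuous F) (hpseudo : PseudomonotoneOn F K) {x d : E} (hx : x ∈ viSolutionSet K F)
    (hd : d ∈ recessionCone K) (hdF : ∀ y ∈ K, ⟪F y, d⟫ ≤ 0) {t : ℝ} (ht : 0 ≤ t) :
    x + t • d ∈ viSolutionSet K F := by
  have hxt : x + t • d ∈ K := hd x hx.1 t ht
  refine ⟨hxt, fun y hy => hKconv.inner_sub_nonneg_of_minty hF hxt (fun z hz => ?_) hy⟩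
  have h1 := hpseudo x hx.1 z hz (hx.2 z hz)
  have h2 := mul_nonpos_of_nonneg_of_nonpos ht (hdF z hz)
  calc 0 ≤ ⟪F z, z - x⟫ - t * ⟪F z, d⟫ := by linarith
    _ = ⟪F z, z - (x + t • d)⟫ := by
      rw [sub_add_eq_sub_sub, inner_sub_right _ (z - x), inner_smul_right]

theorem inner_nonpos_of_tendsto_inv_smul {ι : Type*} {l : Filter ι} [l.NeBot] {a x₀ d : E}
    {x : ι → E} {s : ι → ℝ} (hs : Tendsto s l atTop)
    (hd : Tendsto (fun i => (s i)⁻¹ • (x i - x₀)) l (𝓝 d)) (ha : ∀ᶠ i in l, ⟪a, x i - x₀⟫ ≤ 0) :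
    ⟪a, d⟫ ≤ 0 := by
  refine le_of_tendsto (((continuous_const.inner continuous_id).tendsto d).comp hd) ?_
  filter_upwards [ha, hs.eventually_gt_atTop 0] with i hi hsi
  simpa [inner_smul_right] using mul_nonpos_of_nonneg_of_nonpos (inv_nonneg.mpr hsi.le) hi

theorem exists_mem_recessionCone_of_tendsto_norm [FiniteDimensional ℝ E] {K : Set E}
    (hKc : IsClosed K) (hKconv : Convex ℝ K) {F : E → E} {x : ℕ → E} (hxK : ∀ n, x n ∈ K)
    (hx : Tendsto (fun n => ‖x n‖) atTop atTop)
    (hminty : ∀ y ∈ K, ∀ᶠ n in atTop, 0 ≤ ⟪F y, y - x n⟫) :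
    ∃ d ∈ recessionCone K, d ≠ 0 ∧ ∀ y ∈ K, ⟪F y, d⟫ ≤ 0 := by
  obtain ⟨d, -, φ, hφ, hd⟩ := (isCompact_closedBall (0 : E) 1).tendsto_subseq
    (x := fun n => ‖x n‖⁻¹ • x n) fun n => by
      rw [mem_closedBall_zero_iff, norm_smul, norm_inv, norm_norm]
      exact inv_mul_le_one_of_le₀ le_rfl (norm_nonneg _)
  set s := fun n => ‖x (φ n)‖
  have hs : Tendsto s atTop atTop := hx.comp hφ.tendsto_atTop
  have hd' : ∀ z, Tendsto (fun n => (s n)⁻¹ • (x (φ n) - z)) atTop (𝓝 d) := fun z => by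
    simpa [smul_sub] using hd.sub ((tendsto_inv_atTop_zero.comp hs).smul_const z)
  refine ⟨d, fun z hz t ht => add_smul_mem_of_tendsto_inv_smul hKc hKconv hz (fun n => hxK (φ n))
    hs (hd' z) ht, ?_, fun y hy => inner_nonpos_of_tendsto_inv_smul hs (hd' y) ?_⟩
  · have h1 : ∀ᶠ n in atTop, ‖(s n)⁻¹ • x (φ n)‖ = 1 := by
      filter_upwards [hs.eventually_gt_atTop 0] with n hn
      rw [norm_smul, norm_inv, norm_norm, inv_mul_cancel₀ hn.ne']
    have := tendsto_nhds_unique (hd.norm) (tendsto_const_nhds.congr' (h1.mono fun n h => h.symm))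
    rintro rfl
    simp at this
  · filter_upwards [hφ.tendsto_atTop.eventually (hminty y hy)] with n hn
    rw [← neg_sub, inner_neg_right]
    exact neg_nonpos.mpr hn

theorem PseudomonotoneOn.viSolutionSet_nonempty_of_isCompact {F : E → E} {K : Set E}
    (hpseudo : PseudomonotoneOn F K) (hF : Continuous F) (hne : K.Nonempty) (hcomp : IsCompact K)
    (hconv : Convex ℝ K) : (viSolutionSet K F).Nonempty := by
  obtain ⟨x, hx, hminty⟩ := hpseudo.exists_minty_of_isCompact hne hcomp hconv
  exact ⟨x, hx, fun y hy => hconv.inner_sub_nonneg_of_minty hF hx hminty hy⟩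

variable [FiniteDimensional ℝ E]

theorem viSolutionSet_nonempty {K : Set E} (hne : K.Nonempty) (hKc : IsClosed K)
    (hKconv : Convex ℝ K) {F : E → E} (hF : Continuous F) (hpseudo : PseudomonotoneOn F K)
    (hreg : ∀ d ∈ recessionCone K, (∀ y ∈ K, ⟪F y, d⟫ ≤ 0) → d = 0) :
    (viSolutionSet K F).Nonempty := by
  obtain ⟨x₀, hx₀⟩ := hne
  set r : ℕ → ℝ := fun n => n + ‖x₀‖
  choose m hm using fun n => (hpseudo.mono inter_subset_left).viSolutionSet_nonempty_of_isCompact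
    hF ⟨x₀, hx₀, mem_closedBall_zero_iff.mpr (le_add_of_nonneg_left n.cast_nonneg)⟩
    ((isCompact_closedBall 0 (r n)).inter_left hKc) (hKconv.inter (convex_closedBall 0 (r n)))
  by_cases hint : ∃ n, ‖m n‖ < r n
  · obtain ⟨n, hn⟩ := hint
    refine ⟨m n, (hm n).1.1, fun y hy => hKconv.inner_sub_nonneg_of_mem_nhds (hm n).1.1
      (isOpen_ball.mem_nhds (mem_ball_zero_iff.mpr hn))
      (fun z hz => (hm n).2 z ⟨hz.1, ball_subset_closedBall hz.2⟩) hy⟩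
  · simp only [not_exists, not_lt] at hint
    have hm_norm : Tendsto (fun n => ‖m n‖) atTop atTop :=
      tendsto_atTop_mono (fun n => (le_add_of_nonneg_right (norm_nonneg x₀)).trans (hint n))
        tendsto_natCast_atTop_atTop
    obtain ⟨d, hd, hd0, hdF⟩ := exists_mem_recessionCone_of_tendsto_norm hKc hKconv
      (fun n => (hm n).1.1) hm_norm fun y hy => by
        filter_upwards [tendsto_natCast_atTop_atTop.eventually_ge_atTop ‖y‖] with n hn
        exact hpseudo (m n) (hm n).1.1 y hy ((hm n).2 y
          ⟨hy, mem_closedBall_zero_iff.mpr (by linarith [norm_nonneg x₀])⟩)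
    exact absurd (hreg d hd hdF) hd0

theorem isBounded_viSolutionSet {K : Set E} (hKc : IsClosed K) (hKconv : Convex ℝ K) {F : E → E}
    (hpseudo : PseudomonotoneOn F K)
    (hreg : ∀ d ∈ recessionCone K, (∀ y ∈ K, ⟪F y, d⟫ ≤ 0) → d = 0) :
    Bornology.IsBounded (viSolutionSet K F) := by
  by_contra hS
  have hfar : ∀ n : ℕ, ∃ x ∈ viSolutionSet K F, (n : ℝ) ≤ ‖x‖ := by
    intro n
    by_contra! h
    exact hS (isBounded_iff_forall_norm_le.mpr ⟨n, fun x hx => (h x hx).le⟩)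
  choose x hxS hxn using hfar
  obtain ⟨d, hd, hd0, hdF⟩ := exists_mem_recessionCone_of_tendsto_norm hKc hKconv
    (fun n => (hxS n).1) (tendsto_atTop_mono hxn tendsto_natCast_atTop_atTop) fun y hy =>
      Eventually.of_forall fun n => hpseudo _ (hxS n).1 y hy ((hxS n).2 y hy)
  exact hd0 (hreg d hd hdF)

end VariationalInequality

theorem stmt_10 {E : Type*} [NormedAddCommGroup E] [InnerProductSpace ℝ E]
    [FiniteDimensional ℝ E]
    (K : Set E) (hK : K.Nonempty) (hKc : IsClosed K) (hKconv : Convex ℝ K)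
    (F : E → E) (hF : Continuous F)
    (hpseudo : ∀ x ∈ K, ∀ y ∈ K, 0 ≤ ⟪F x, y - x⟫ → 0 ≤ ⟪F y, y - x⟫) :
    ({x ∈ K | ∀ y ∈ K, 0 ≤ ⟪F x, y - x⟫}.Nonempty ∧
      Bornology.IsBounded {x ∈ K | ∀ y ∈ K, 0 ≤ ⟪F x, y - x⟫}) ↔
    (∀ d : E, (∀ x ∈ K, ∀ t : ℝ, 0 ≤ t → x + t • d ∈ K) →
      (∀ x ∈ K, ⟪F x, d⟫ ≤ 0) → d = 0) := by
  constructor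
  · rintro ⟨⟨x, hx⟩, hS⟩ d hd hdF
    exact eq_zero_of_isBounded_of_add_smul_mem hS fun t ht =>
      add_smul_mem_viSolutionSet hKconv hF hpseudo hx hd hdF ht
  · intro hreg
    exact ⟨viSolutionSet_nonempty hK hKc hKconv hF hpseudo hreg,
      isBounded_viSolutionSet hKc hKconv hpseudo hreg⟩
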